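/- Euler–Rodrigues formula in Cartan's matrix form: let l ∈ ℝ³ be a unit vector with associated matrix L, let θ ∈ ℝ, and let x ∈ ℝ³ with associated matrix X. Let x' = cos θ·x + sin θ·(l × x) + (1 − cos θ)·⟨l, x⟩·l be the image of x under the rotation of axis l and angle θ, with associated matrix X'. Then X' = (cos(θ/2)·E₂ − i·sin(θ/2)·L)·X·(cos(θ/2)·E₂ + i·sin(θ/2)·L). -/

import Mathlib

open Matrix

/-- The 2×2 complex matrix `X = x₁H₁ + x₂H₂ + x₃H₃ = [[x₃, x₁−ix₂],[x₁+ix₂, −x₃]]`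
associated to a vector `x = (x₁,x₂,x₃) ∈ ℝ³` (Cartan). -/
def assocMat (x : Fin 3 → ℝ) : Matrix (Fin 2) (Fin 2) ℂ :=
  !![(x 2 : ℂ), (x 0 : ℂ) - (x 1 : ℂ) * Complex.I;
     (x 0 : ℂ) + (x 1 : ℂ) * Complex.I, -(x 2 : ℂ)]

set_option maxHeartbeats 1600000 in
/-- Euler–Rodrigues formula in Cartan's matrix form: if `l` is a unit vector with
associated matrix `L` and `x'` is the image of `x` under the rotation of axis `l`
and angle `θ`, then `X' = (cos(θ/2)E₂ − i sin(θ/2)L) X (cos(θ/2)E₂ + i sin(θ/2)L)`. -/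
theorem euler_rodrigues_cartan_formula
    (l : Fin 3 → ℝ) (hl : l ⬝ᵥ l = 1) (θ : ℝ) (x : Fin 3 → ℝ) :
    assocMat (Real.cos θ • x + Real.sin θ • (l ⨯₃ x) + ((1 - Real.cos θ) * (l ⬝ᵥ x)) • l)
      = ((Real.cos (θ / 2) : ℂ) • (1 : Matrix (Fin 2) (Fin 2) ℂ)
            - (Complex.I * (Real.sin (θ / 2) : ℂ)) • assocMat l)
        * assocMat x
        * ((Real.cos (θ / 2) : ℂ) • (1 : Matrix (Fin 2) (Fin 2) ℂ)
            + (Complex.I * (Real.sin (θ / 2) : ℂ)) • assocMat l) := by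
  have hc : Real.cos θ = 2 * Real.cos (θ / 2) ^ 2 - 1 := by
    have := Real.cos_two_mul (θ / 2)
    rw [show 2 * (θ / 2) = θ by ring] at this
    linarith
  have hs : Real.sin θ = 2 * Real.sin (θ / 2) * Real.cos (θ / 2) := by
    have := Real.sin_two_mul (θ / 2)
    rw [show 2 * (θ / 2) = θ by ring] at this
    linarith
  have hp : Real.sin (θ / 2) ^ 2 + Real.cos (θ / 2) ^ 2 = 1 :=
    Real.sin_sq_add_cos_sq (θ / 2)
  have hq : l 0 ^ 2 + l 1 ^ 2 + l 2 ^ 2 = 1 := by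
    simpa [dotProduct, Fin.sum_univ_three, sq] using hl
  set s : ℝ := Real.sin (θ / 2)
  set c : ℝ := Real.cos (θ / 2)
  set d : ℝ := l ⬝ᵥ x with hd
  have hde : d = l 0 * x 0 + l 1 * x 1 + l 2 * x 2 := by
    simp [hd, dotProduct, Fin.sum_univ_three]
  ext i j
  fin_cases i <;> fin_cases j
  all_goals simp only [assocMat, cross_apply, Matrix.mul_apply, Fin.sum_univ_two,
    Matrix.add_apply, Matrix.sub_apply, Matrix.smul_apply, Matrix.one_apply,
    Pi.add_apply, Pi.smul_apply, smul_eq_mul, Matrix.cons_val', Matrix.cons_val_zero,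
    Matrix.cons_val_one, Matrix.head_cons, Matrix.of_apply, Fin.isValue,
    Fin.zero_eta, Fin.mk_one, Matrix.empty_val', Matrix.cons_val_fin_one,
    hc, hs, hde]
  all_goals simp [Complex.ext_iff, Complex.add_re, Complex.add_im, Complex.mul_re,
    Complex.mul_im, Complex.sub_re, Complex.sub_im, ← Complex.ofReal_pow,
    -Complex.ofReal_pow]
  all_goals ring_nf
  all_goals try constructor
  all_goals
    first
    | trivial
    | ring1
    | linear_combination (x 2 - 2*(l 0*x 0 + l 1*x 1 + l 2*x 2)*l 2)*hp + s^2*x 2*hq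
    | linear_combination (-x 2 + 2*(l 0*x 0 + l 1*x 1 + l 2*x 2)*l 2)*hp - s^2*x 2*hq
    | linear_combination (x 0 - 2*(l 0*x 0 + l 1*x 1 + l 2*x 2)*l 0)*hp + s^2*x 0*hq
    | linear_combination (-x 0 + 2*(l 0*x 0 + l 1*x 1 + l 2*x 2)*l 0)*hp - s^2*x 0*hq
    | linear_combination (x 1 - 2*(l 0*x 0 + l 1*x 1 + l 2*x 2)*l 1)*hp + s^2*x 1*hq
    | linear_combination (-x 1 + 2*(l 0*x 0 + l 1*x 1 + l 2*x 2)*l 1)*hp - s^2*x 1*hq
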